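/- arXiv:2307.06347 — 2 statements merged into one kernel-verified Lean document; each statement's English description precedes it below -/
import Mathlib

section
/- For fixed Δx > 0 and α ∈ ℝⁿ, the function ξ(t) = e^{iα·x}(\hat{f}·cos(β₀ t) + \hat{g}·sin(β₀ t)/β₀) (constants \hat{f}, \hat{g} ∈ ℂ, β₀ > 0) satisfies the semidiscrete equation ξ''(t) = Σ_{k=1}^n δ_{k,Δx}^{-1}∘δ_{k,Δx} ξ(t) at every point x ∈ ℝⁿ, where β₀² = Σ_{k=1}^n (sin²(α_k Δx/2)/(α_k Δx/2)²)α_k², with initial conditions ξ(0) = \hat{f}e^{iα·x} and ξ'(0) = \hat{g}e^{iα·x}. -/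
/-! Separation of variables: `ξ t x` is the plane wave `e^{iα·x}` times the harmonic motion
`c t = f̂ cos(β₀t) + ĝ sin(β₀t)/β₀`. Since `e^{iθ} - 2 + e^{-iθ} = -4 sin²(θ/2)`, the plane wave is
an eigenfunction of the `k`-th second difference with eigenvalue
`-4 sin²(α_kΔx/2)/Δx² = -(sin(α_kΔx/2)/(α_kΔx/2))² α_k²`, so the discrete Laplacian multiplies
it by `-β₀²`; and `c'' = -β₀² c`. -/

open Complex

noncomputable def harmonicMotion (β : ℝ) (a b : ℂ) (t : ℝ) : ℂ :=
  a * (Real.cos (β * t) : ℂ) + b * (Real.sin (β * t) : ℂ)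

theorem hasDerivAt_harmonicMotion (β : ℝ) (a b : ℂ) (t : ℝ) :
    HasDerivAt (harmonicMotion β a b) (harmonicMotion β (β * b) (-(β * a)) t) t := by
  have hlin : HasDerivAt (fun s : ℝ => β * s) β t := by
    simpa using (hasDerivAt_id t).const_mul β
  have hcos := ((Real.hasDerivAt_cos _).comp t hlin).ofReal_comp.const_mul a
  have hsin := ((Real.hasDerivAt_sin _).comp t hlin).ofReal_comp.const_mul b
  refine (hcos.add hsin).congr_deriv ?_
  simp only [harmonicMotion]
  push_cast
  ring

theorem deriv_harmonicMotion (β : ℝ) (a b : ℂ) :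
    deriv (harmonicMotion β a b) = harmonicMotion β (β * b) (-(β * a)) :=
  funext fun t => (hasDerivAt_harmonicMotion β a b t).deriv

theorem iteratedDeriv_two_harmonicMotion (β : ℝ) (a b : ℂ) (t : ℝ) :
    iteratedDeriv 2 (harmonicMotion β a b) t = -(β : ℂ) ^ 2 * harmonicMotion β a b t := by
  rw [iteratedDeriv_succ, iteratedDeriv_one, deriv_harmonicMotion, deriv_harmonicMotion,
    harmonicMotion, harmonicMotion]
  ring

theorem harmonicMotion_zero (β : ℝ) (a b : ℂ) : harmonicMotion β a b 0 = a := by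
  simp [harmonicMotion]

theorem mul_harmonicMotion (z : ℂ) (β : ℝ) (a b : ℂ) (t : ℝ) :
    z * harmonicMotion β a b t = harmonicMotion β (z * a) (z * b) t := by
  simp only [harmonicMotion]
  ring

noncomputable def planeWave {ι : Type*} [Fintype ι] (α x : ι → ℝ) : ℂ :=
  exp (I * (α ⬝ᵥ x : ℝ))

theorem planeWave_add_smul_single {ι : Type*} [Fintype ι] [DecidableEq ι] (α x : ι → ℝ) (h : ℝ) (k : ι) :
    planeWave α (x + h • Pi.single k 1) = planeWave α x * exp ((α k * h : ℝ) * I) := by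
  rw [planeWave, planeWave, ← exp_add, dotProduct_add, dotProduct_smul, dotProduct_single,
    smul_eq_mul, mul_one]
  push_cast
  ring_nf

theorem exp_mul_I_sub_two_add_exp_neg_mul_I (z : ℂ) :
    exp (z * I) - 2 + exp (-z * I) = -(4 * sin (z / 2) ^ 2) := by
  have hcos : cos z = 2 * cos (z / 2) ^ 2 - 1 := by
    rw [← cos_two_mul, mul_div_cancel₀ _ two_ne_zero]
  rw [sub_add_eq_add_sub, ← two_cos, hcos, sin_sq]
  ring

theorem planeWave_secondDifference {ι : Type*} [Fintype ι] [DecidableEq ι] (α x : ι → ℝ) (h : ℝ) (k : ι) :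
    planeWave α (x + h • Pi.single k 1) - 2 * planeWave α x + planeWave α (x - h • Pi.single k 1)
      = -(4 * sin (α k * h / 2) ^ 2) * planeWave α x := by
  rw [sub_eq_add_neg x, ← neg_smul, planeWave_add_smul_single, planeWave_add_smul_single,
    ← exp_mul_I_sub_two_add_exp_neg_mul_I]
  push_cast
  ring_nf

theorem four_mul_sin_sq_div_sq (a h : ℝ) :
    4 * Real.sin (a * h / 2) ^ 2 / h ^ 2 = Real.sin (a * h / 2) ^ 2 / (a * h / 2) ^ 2 * a ^ 2 := by
  rcases eq_or_ne a 0 with rfl | ha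
  · simp
  rcases eq_or_ne h 0 with rfl | hh
  · simp
  field_simp
  ring

theorem sum_secondDifference_planeWave {ι : Type*} [Fintype ι] [DecidableEq ι] (α x : ι → ℝ) (h : ℝ) :
    ∑ k, (planeWave α (x + h • Pi.single k 1) - 2 * planeWave α x +
        planeWave α (x - h • Pi.single k 1)) / (h : ℂ) ^ 2
      = -(∑ k, Real.sin (α k * h / 2) ^ 2 / (α k * h / 2) ^ 2 * α k ^ 2 : ℝ) * planeWave α x := by
  simp_rw [planeWave_secondDifference, ← four_mul_sin_sq_div_sq]
  push_cast
  rw [← Finset.sum_neg_distrib, Finset.sum_mul]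
  refine Finset.sum_congr rfl fun k _ => ?_
  ring

theorem stmt11_general (n : ℕ) (Δx : ℝ)
    (α : Fin n → ℝ) (β₀ : ℝ) (hβ₀ : 0 < β₀)
    (hdisp : β₀ ^ 2 = ∑ k, (Real.sin (α k * Δx / 2) ^ 2 / (α k * Δx / 2) ^ 2) * (α k) ^ 2)
    (fh gh : ℂ)
    (ξ : ℝ → (Fin n → ℝ) → ℂ)
    (hξ : ∀ t x, ξ t x = Complex.exp (Complex.I * ((∑ j, α j * x j : ℝ))) *
      (fh * ((Real.cos (β₀ * t) : ℝ) : ℂ) +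
       gh * ((Real.sin (β₀ * t) / β₀ : ℝ) : ℂ))) :
    (∀ (x : Fin n → ℝ) (t : ℝ),
        iteratedDeriv 2 (fun s => ξ s x) t =
          ∑ k, (ξ t (x + Δx • (Pi.single k 1 : Fin n → ℝ)) - 2 * ξ t x +
                  ξ t (x - Δx • (Pi.single k 1 : Fin n → ℝ))) / (Δx : ℂ) ^ 2) ∧
      (∀ x : Fin n → ℝ, ξ 0 x = fh * Complex.exp (Complex.I * ((∑ j, α j * x j : ℝ)))) ∧
      (∀ x : Fin n → ℝ, deriv (fun s => ξ s x) 0 =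
        gh * Complex.exp (Complex.I * ((∑ j, α j * x j : ℝ)))) := by
  have hsep : ∀ t x, ξ t x = planeWave α x * harmonicMotion β₀ fh (gh / β₀) t := by
    intro t x
    rw [hξ, planeWave, dotProduct, harmonicMotion]
    push_cast
    ring
  have htime : ∀ x, (fun s => ξ s x) =
      harmonicMotion β₀ (planeWave α x * fh) (planeWave α x * (gh / β₀)) :=
    fun x => funext fun s => (hsep s x).trans (mul_harmonicMotion ..)
  refine ⟨fun x t => ?_, fun x => ?_, fun x => ?_⟩
  · calc iteratedDeriv 2 (fun s => ξ s x) t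
          = -(β₀ : ℂ) ^ 2 * (planeWave α x * harmonicMotion β₀ fh (gh / β₀) t) := by
            rw [htime, iteratedDeriv_two_harmonicMotion, mul_harmonicMotion (planeWave α x)]
        _ = (∑ k, (planeWave α (x + Δx • Pi.single k 1) - 2 * planeWave α x +
              planeWave α (x - Δx • Pi.single k 1)) / (Δx : ℂ) ^ 2) *
              harmonicMotion β₀ fh (gh / β₀) t := by
            rw [sum_secondDifference_planeWave, ← hdisp]
            push_cast
            ring
        _ = _ := by
            simp_rw [hsep, Finset.sum_mul]
            refine Finset.sum_congr rfl fun k _ => ?_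
            ring
  · rw [hsep, harmonicMotion_zero, mul_comm]
    rfl
  · have hβ₀' : (β₀ : ℂ) ≠ 0 := by exact_mod_cast hβ₀.ne'
    rw [htime, deriv_harmonicMotion, harmonicMotion_zero, mul_left_comm,
      mul_div_cancel₀ _ hβ₀', mul_comm]
    rfl

/-- Lagrange's semidiscrete ODE model: for β₀ > 0 with
β₀² = Σ_k (sin²(α_kΔx/2)/(α_kΔx/2)²)α_k², the function
ξ(t)(x) = e^{iα·x}(f̂ cos(β₀t) + ĝ sin(β₀t)/β₀) satisfies
ξ'' = Σ_k δ_{k,Δx}^{-1}∘δ_{k,Δx} ξ with ξ(0) = f̂e^{iα·x}, ξ'(0) = ĝe^{iα·x}. -/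
theorem stmt11 (n : ℕ) (hn : 1 ≤ n) (Δx : ℝ) (hΔx : 0 < Δx)
    (α : Fin n → ℝ) (hα : ∀ k, α k ≠ 0) (β₀ : ℝ) (hβ₀ : 0 < β₀)
    (hdisp : β₀ ^ 2 = ∑ k, (Real.sin (α k * Δx / 2) ^ 2 / (α k * Δx / 2) ^ 2) * (α k) ^ 2)
    (fh gh : ℂ)
    (ξ : ℝ → (Fin n → ℝ) → ℂ)
    (hξ : ∀ t x, ξ t x = Complex.exp (Complex.I * ((∑ j, α j * x j : ℝ))) *
      (fh * ((Real.cos (β₀ * t) : ℝ) : ℂ) +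
       gh * ((Real.sin (β₀ * t) / β₀ : ℝ) : ℂ))) :
    (∀ (x : Fin n → ℝ) (t : ℝ),
        iteratedDeriv 2 (fun s => ξ s x) t =
          ∑ k, (ξ t (x + Δx • (Pi.single k 1 : Fin n → ℝ)) - 2 * ξ t x +
                  ξ t (x - Δx • (Pi.single k 1 : Fin n → ℝ))) / (Δx : ℂ) ^ 2) ∧
      (∀ x : Fin n → ℝ, ξ 0 x = fh * Complex.exp (Complex.I * ((∑ j, α j * x j : ℝ)))) ∧
      (∀ x : Fin n → ℝ, deriv (fun s => ξ s x) 0 =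
        gh * Complex.exp (Complex.I * ((∑ j, α j * x j : ℝ)))) :=
  stmt11_general n Δx α β₀ hβ₀ hdisp fh gh ξ hξ
end

section
/- Let β(Δx,Δt) be defined implicitly for small Δx, Δt and |α| ≤ M by sin²(βΔt/2)/(Δt/2)² = Σ_{k=1}^n sin²(α_k Δx/2)/(Δx/2)², with β(α,0,0) = |α|. Then for fixed M, β extends to a continuous function of (α, Δx, Δt) on {|α| ≤ M} × [0,R] × [0,R] for some R > 0, and in particular β(α,Δx,Δt) → |α| uniformly on {|α| ≤ M} as (Δx,Δt) → (0,0). -/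
open Filter Topology

noncomputable def sc (x : ℝ) : ℝ := if x = 0 then 1 else Real.sin x / x
noncomputable def asc (x : ℝ) : ℝ := if x = 0 then 1 else Real.arcsin x / x

lemma cont_of_slope (g f : ℝ → ℝ) (hf : Continuous f) (hf0 : f 0 = 0)
    (hd : HasDerivAt f 1 0) (hg : ∀ x ≠ 0, g x = f x / x) (hg0 : g 0 = 1) :
    Continuous g := by
  rw [continuous_iff_continuousAt]
  intro x
  rcases eq_or_ne x 0 with rfl | hx
  · have h1 : Tendsto (slope f 0) (𝓝[≠] 0) (𝓝 1) := hasDerivAt_iff_tendsto_slope.mp hd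
    have h2 : Tendsto g (𝓝[≠] 0) (𝓝 1) := by
      refine h1.congr' ?_
      filter_upwards [self_mem_nhdsWithin] with y hy
      simp only [Set.mem_compl_iff, Set.mem_singleton_iff] at hy
      rw [slope_def_field, hg y hy, hf0]
      field_simp
      ring
    have : Tendsto g (𝓝 0) (𝓝 1) := by
      rw [← nhdsNE_sup_pure]
      exact h2.sup (by simpa [hg0] using tendsto_pure_nhds g 0)
    simpa [ContinuousAt, hg0] using this
  · have : ContinuousAt (fun y => f y / y) x := (hf.continuousAt).div continuousAt_id hx
    refine this.congr ?_
    filter_upwards [isOpen_ne.mem_nhds hx] with y hy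
    exact (hg y hy).symm

lemma continuous_sc : Continuous sc := by
  refine cont_of_slope sc Real.sin Real.continuous_sin Real.sin_zero ?_ (fun x hx => by simp [sc, hx])
    (by simp [sc])
  simpa using Real.hasDerivAt_sin 0

lemma continuous_asc : Continuous asc := by
  refine cont_of_slope asc Real.arcsin Real.continuous_arcsin Real.arcsin_zero ?_
    (fun x hx => by simp [asc, hx]) (by simp [asc])
  have := Real.hasDerivAt_arcsin (x := 0) (by norm_num) (by norm_num)
  simpa using this

lemma abs_sc_le_one (x : ℝ) : |sc x| ≤ 1 := by
  rcases eq_or_ne x 0 with rfl | hx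
  · simp [sc]
  · simp only [sc, if_neg hx, abs_div]
    exact div_le_one_of_le₀ (Real.abs_sin_le_abs) (abs_nonneg x)

lemma mul_sc (a d : ℝ) (hd : d ≠ 0) : a * sc (a * d) = Real.sin (a * d) / d := by
  rcases eq_or_ne a 0 with rfl | ha
  · simp
  · simp only [sc, if_neg (mul_ne_zero ha hd)]
    field_simp

noncomputable def gfun (n : ℕ) (α : EuclideanSpace ℝ (Fin n)) (dx : ℝ) : ℝ :=
  Real.sqrt (∑ k, (α k * sc (α k * (dx / 2))) ^ 2)

lemma gfun_nonneg (n : ℕ) (α : EuclideanSpace ℝ (Fin n)) (dx : ℝ) : 0 ≤ gfun n α dx :=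
  Real.sqrt_nonneg _

lemma gfun_le (n : ℕ) (α : EuclideanSpace ℝ (Fin n)) (dx : ℝ) : gfun n α dx ≤ ‖α‖ := by
  have hnorm : ‖α‖ = Real.sqrt (∑ k, (α k) ^ 2) := by
    rw [EuclideanSpace.norm_eq]
    congr 1
    exact Finset.sum_congr rfl fun k _ => by rw [Real.norm_eq_abs, sq_abs]
  rw [hnorm]
  apply Real.sqrt_le_sqrt
  apply Finset.sum_le_sum
  intro k _
  rw [mul_pow]
  have h1 : sc (α k * (dx / 2)) ^ 2 ≤ 1 := by
    rw [← sq_abs]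
    exact pow_le_one₀ (abs_nonneg _) (abs_sc_le_one _)
  nlinarith [sq_nonneg (α k)]

lemma gfun_zero (n : ℕ) (α : EuclideanSpace ℝ (Fin n)) : gfun n α 0 = ‖α‖ := by
  rw [EuclideanSpace.norm_eq, gfun]
  congr 1
  refine Finset.sum_congr rfl fun k _ => ?_
  simp [sc, Real.norm_eq_abs, sq_abs]

lemma gfun_sq (n : ℕ) (α : EuclideanSpace ℝ (Fin n)) (dx : ℝ) (hdx : 0 < dx) :
    (gfun n α dx) ^ 2 = ∑ k, Real.sin (α k * dx / 2) ^ 2 / (dx / 2) ^ 2 := by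
  rw [gfun, Real.sq_sqrt (Finset.sum_nonneg fun k _ => sq_nonneg _)]
  refine Finset.sum_congr rfl fun k _ => ?_
  rw [mul_sc _ _ (by positivity), div_pow, mul_div_assoc]

lemma continuous_gfun3 (n : ℕ) :
    Continuous (fun p : EuclideanSpace ℝ (Fin n) × ℝ × ℝ => gfun n p.1 p.2.1) := by
  unfold gfun
  apply Real.continuous_sqrt.comp
  apply continuous_finset_sum
  intro k _
  have hk : Continuous (fun p : EuclideanSpace ℝ (Fin n) × ℝ × ℝ => p.1 k) :=
    (EuclideanSpace.proj k).continuous.comp continuous_fst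
  have hx : Continuous (fun p : EuclideanSpace ℝ (Fin n) × ℝ × ℝ => p.2.1) :=
    continuous_fst.comp continuous_snd
  exact ((hk.mul (continuous_sc.comp (hk.mul (hx.div_const 2)))).pow 2)

lemma continuous_B (n : ℕ) : Continuous (fun p : EuclideanSpace ℝ (Fin n) × ℝ × ℝ =>
    gfun n p.1 p.2.1 * asc (gfun n p.1 p.2.1 * (p.2.2 / 2))) := by
  have hg := continuous_gfun3 n
  have ht : Continuous (fun p : EuclideanSpace ℝ (Fin n) × ℝ × ℝ => p.2.2) :=
    continuous_snd.comp continuous_snd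
  exact hg.mul (continuous_asc.comp (hg.mul (ht.div_const 2)))

set_option maxHeartbeats 1000000 in
/-- For fixed M > 0, the implicitly defined dispersion frequency β extends to a
continuous function B on {|α| ≤ M} × [0,R] × [0,R] for some R > 0, satisfying
B(α,0,0) = |α|, the discrete dispersion relation
sin²(BΔt/2)/(Δt/2)² = Σ_k sin²(α_kΔx/2)/(Δx/2)² for 0 < Δx,Δt ≤ R, and
B(α,Δx,Δt) → |α| uniformly on {|α| ≤ M} as (Δx,Δt) → (0,0). -/
theorem stmt18 (n : ℕ) (hn : 1 ≤ n) (M : ℝ) (hM : 0 < M) :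
    ∃ R > 0, ∃ B : EuclideanSpace ℝ (Fin n) × ℝ × ℝ → ℝ,
      ContinuousOn B {p | ‖p.1‖ ≤ M ∧ p.2.1 ∈ Set.Icc 0 R ∧ p.2.2 ∈ Set.Icc 0 R} ∧
      (∀ α : EuclideanSpace ℝ (Fin n), ‖α‖ ≤ M → B (α, 0, 0) = ‖α‖) ∧
      (∀ (α : EuclideanSpace ℝ (Fin n)) (Δx Δt : ℝ), ‖α‖ ≤ M →
        0 < Δx → Δx ≤ R → 0 < Δt → Δt ≤ R →
        Real.sin (B (α, Δx, Δt) * Δt / 2) ^ 2 / (Δt / 2) ^ 2 =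
          ∑ k, Real.sin (α k * Δx / 2) ^ 2 / (Δx / 2) ^ 2) ∧
      (∀ ε > 0, ∃ δ > 0, ∀ (α : EuclideanSpace ℝ (Fin n)) (Δx Δt : ℝ),
        ‖α‖ ≤ M → 0 ≤ Δx → Δx ≤ δ → 0 ≤ Δt → Δt ≤ δ →
        |B (α, Δx, Δt) - ‖α‖| < ε) := by
  set R : ℝ := 2 / M with hR
  have hR0 : 0 < R := by positivity
  refine ⟨R, hR0, fun p => gfun n p.1 p.2.1 * asc (gfun n p.1 p.2.1 * (p.2.2 / 2)), ?_, ?_, ?_, ?_⟩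
  · exact (continuous_B n).continuousOn
  ·
    intro α hα
    simp [gfun_zero, asc]
  · intro α Δx Δt hα hΔx hΔxR hΔt hΔtR
    beta_reduce
    have hg0 : 0 ≤ gfun n α Δx := gfun_nonneg n α Δx
    have hgM : gfun n α Δx ≤ M := le_trans (gfun_le n α Δx) hα
    have hy1 : gfun n α Δx * (Δt / 2) ≤ 1 := by
      calc gfun n α Δx * (Δt / 2) ≤ M * (R / 2) := by
            apply mul_le_mul hgM (by linarith) (by linarith) hM.le
        _ = 1 := by rw [hR]; field_simp [hM.ne']
    rw [← gfun_sq n α Δx hΔx]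
    rcases eq_or_lt_of_le hg0 with hge | hgpos
    · have h0 : gfun n α Δx = 0 := hge.symm
      rw [h0]
      simp
    · have hyne : gfun n α Δx * (Δt / 2) ≠ 0 := by positivity
      have harg : gfun n α Δx * asc (gfun n α Δx * (Δt / 2)) * Δt / 2
          = Real.arcsin (gfun n α Δx * (Δt / 2)) := by
        simp only [asc]; rw [if_neg hyne]
        field_simp
      have hyneg : (-1 : ℝ) ≤ gfun n α Δx * (Δt / 2) :=
        le_trans (by norm_num) (mul_nonneg hg0 (by linarith))
      rw [harg, Real.sin_arcsin hyneg hy1]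
      rw [mul_pow, mul_div_assoc]
      rw [div_self (by positivity : ((Δt / 2) ^ 2 : ℝ) ≠ 0), mul_one]
  · intro ε hε
    -- uniform continuity on the compact set
    set K : Set (EuclideanSpace ℝ (Fin n) × ℝ × ℝ) :=
      (Metric.closedBall 0 M) ×ˢ (Set.Icc 0 R ×ˢ Set.Icc 0 R) with hK
    have hKc : IsCompact K := (isCompact_closedBall 0 M).prod
      ((isCompact_Icc).prod isCompact_Icc)
    set B := fun p : EuclideanSpace ℝ (Fin n) × ℝ × ℝ =>
      gfun n p.1 p.2.1 * asc (gfun n p.1 p.2.1 * (p.2.2 / 2)) with hB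
    have hBc : Continuous B := continuous_B n
    have hUC : UniformContinuousOn B K := hKc.uniformContinuousOn_of_continuous hBc.continuousOn
    rw [Metric.uniformContinuousOn_iff] at hUC
    obtain ⟨δ, hδ0, hδ⟩ := hUC ε hε
    refine ⟨min (δ / 2) R, by positivity, ?_⟩
    intro α Δx Δt hα hx0 hxδ ht0 htδ
    have hxR : Δx ≤ R := le_trans hxδ (min_le_right _ _)
    have htR : Δt ≤ R := le_trans htδ (min_le_right _ _)
    have hmem1 : (α, Δx, Δt) ∈ K := by
      refine ⟨Metric.mem_closedBall.mpr ?_, ⟨hx0, hxR⟩, ⟨ht0, htR⟩⟩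
      simpa using hα
    have hmem2 : (α, (0 : ℝ), (0 : ℝ)) ∈ K := by
      refine ⟨Metric.mem_closedBall.mpr ?_, ⟨le_refl 0, hR0.le⟩, ⟨le_refl 0, hR0.le⟩⟩
      simpa using hα
    have hdist : dist (α, Δx, Δt) ((α, (0, 0)) : EuclideanSpace ℝ (Fin n) × ℝ × ℝ) < δ := by
      rw [Prod.dist_eq, Prod.dist_eq]
      simp only [dist_self]
      rw [Real.dist_eq, Real.dist_eq]
      rw [sub_zero, sub_zero, abs_of_nonneg hx0, abs_of_nonneg ht0]
      have : max (0:ℝ) (max Δx Δt) ≤ δ / 2 := by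
        apply max_le (by linarith)
        exact max_le (le_trans hxδ (min_le_left _ _)) (le_trans htδ (min_le_left _ _))
      linarith
    have := hδ _ hmem1 _ hmem2 hdist
    rw [Real.dist_eq] at this
    have hB00 : B (α, 0, 0) = ‖α‖ := by simp [hB, gfun_zero, asc]
    rw [hB00] at this
    exact this
end
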